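/- With β(α) defined by (1+α)^{-1/2} = ∫₀^∞ (1+β/u)^{-1/2} k_λ(u) du, one has lim_{α→∞} (β(α)/α)^{1/2} = E(√U) = (2/λ)^{1/2} Γ((λ+1)/2)/Γ(λ/2), where U ~ Gamma(λ/2, rate λ/2). -/

import Mathlib

open MeasureTheory Real Set Filter

/-- Gamma(shape l/2, rate l/2) density (on `(0,∞)`). -/
noncomputable def gammaPdf (l u : ℝ) : ℝ :=
  ((l / 2) ^ (l / 2) / Real.Gamma (l / 2)) * u ^ (l / 2 - 1) * Real.exp (-(l * u / 2))

/-! Put `φ(b) = ∫₀^∞ (1 + b/u)^{-1/2} k_λ(u) du`, so that `φ(β(α)) = (1 + α)^{-1/2} → 0`. As `φ` is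
antitone and positive on `[0, ∞)`, this forces `β(α) → ∞`. The functions
`√b (1 + b/u)^{-1/2} = √(b u / (u + b))` are bounded by `√u` and tend to `√u` as `b → ∞`, so by
dominated convergence `√b φ(b) → E √U`, a Gamma integral. Dividing by `√α (1 + α)^{-1/2} → 1`
gives the limit of `√(β(α) / α)`. -/

open scoped Topology

section GammaMoments

lemma integrableOn_rpow_mul_exp_neg_mul {s r : ℝ} (hs : -1 < s) (hr : 0 < r) :
    IntegrableOn (fun u : ℝ => u ^ s * exp (-(r * u))) (Ioi 0) := by
  refine (integrableOn_rpow_mul_exp_neg_mul_rpow hs one_pos hr).congr_fun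
    (fun u _ => ?_) measurableSet_Ioi
  simp only [rpow_one, neg_mul]

lemma rpow_mul_gammaPdf {l s u : ℝ} (hu : 0 < u) :
    u ^ s * gammaPdf l u =
      (l / 2) ^ (l / 2) / Gamma (l / 2) * (u ^ (l / 2 + s - 1) * exp (-(l / 2 * u))) := by
  rw [gammaPdf, show l / 2 + s - 1 = s + (l / 2 - 1) by ring, rpow_add hu,
    show l / 2 * u = l * u / 2 by ring]
  ring

lemma integrableOn_rpow_mul_gammaPdf {l s : ℝ} (hl : 0 < l) (hs : -(l / 2) < s) :
    IntegrableOn (fun u => u ^ s * gammaPdf l u) (Ioi 0) :=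
  IntegrableOn.congr_fun
    ((integrableOn_rpow_mul_exp_neg_mul (by linarith) (by positivity)).const_mul _)
    (fun _ hu => (rpow_mul_gammaPdf hu).symm) measurableSet_Ioi

lemma integral_rpow_mul_gammaPdf {l s : ℝ} (hl : 0 < l) (hs : -(l / 2) < s) :
    ∫ u in Ioi (0 : ℝ), u ^ s * gammaPdf l u =
      (2 / l) ^ s * Gamma (l / 2 + s) / Gamma (l / 2) := by
  have hl2 : 0 < l / 2 := by positivity
  rw [setIntegral_congr_fun measurableSet_Ioi (fun _ hu => rpow_mul_gammaPdf hu),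
    integral_const_mul, integral_rpow_mul_exp_neg_mul_Ioi (by linarith) hl2,
    show 1 / (l / 2) = 2 / l by ring, rpow_add (by positivity)]
  have hcancel : (l / 2) ^ (l / 2) * (2 / l) ^ (l / 2) = 1 := by
    rw [← mul_rpow hl2.le (by positivity), show l / 2 * (2 / l) = 1 by field_simp, one_rpow]
  calc _ = (l / 2) ^ (l / 2) * (2 / l) ^ (l / 2) * ((2 / l) ^ s * Gamma (l / 2 + s))
        / Gamma (l / 2) := by ring
    _ = _ := by rw [hcancel, one_mul]

lemma gammaPdf_pos {l u : ℝ} (hl : 0 < l) (hu : 0 < u) : 0 < gammaPdf l u := by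
  unfold gammaPdf
  positivity

lemma integrableOn_gammaPdf {l : ℝ} (hl : 0 < l) : IntegrableOn (gammaPdf l) (Ioi 0) := by
  simpa only [rpow_zero, one_mul] using integrableOn_rpow_mul_gammaPdf (s := 0) hl (by linarith)

lemma integral_sqrt_mul_gammaPdf {l : ℝ} (hl : 0 < l) :
    ∫ u in Ioi (0 : ℝ), √u * gammaPdf l u = √(2 / l) * Gamma ((l + 1) / 2) / Gamma (l / 2) := by
  simp only [sqrt_eq_rpow]
  rw [integral_rpow_mul_gammaPdf hl (by linarith), show l / 2 + 1 / 2 = (l + 1) / 2 by ring]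

end GammaMoments

section InvSqrtTransform

noncomputable def invSqrtTransform (k : ℝ → ℝ) (b : ℝ) : ℝ :=
  ∫ u in Ioi (0 : ℝ), (1 + b / u) ^ (-(1 / 2 : ℝ)) * k u

lemma one_le_one_add_div {b u : ℝ} (hb : 0 ≤ b) (hu : 0 < u) : 1 ≤ 1 + b / u :=
  le_add_of_nonneg_right (by positivity)

lemma sqrt_mul_rpow_neg_half_one_add_div {b u : ℝ} (hb : 0 ≤ b) (hu : 0 < u) :
    √b * (1 + b / u) ^ (-(1 / 2 : ℝ)) = √(b / (1 + b / u)) := by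
  rw [sqrt_div hb, rpow_neg (by positivity), ← sqrt_eq_rpow]
  exact (div_eq_mul_inv _ _).symm

lemma sqrt_mul_rpow_neg_half_one_add_div_le {b u : ℝ} (hb : 0 ≤ b) (hu : 0 < u) :
    √b * (1 + b / u) ^ (-(1 / 2 : ℝ)) ≤ √u := by
  rw [sqrt_mul_rpow_neg_half_one_add_div hb hu]
  refine sqrt_le_sqrt ((div_le_iff₀ (by positivity)).2 ?_)
  rw [mul_add, mul_one, mul_div_cancel₀ _ hu.ne']
  linarith

lemma tendsto_sqrt_mul_rpow_neg_half_one_add_div {u : ℝ} (hu : 0 < u) :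
    Tendsto (fun b => √b * (1 + b / u) ^ (-(1 / 2 : ℝ))) atTop (𝓝 √u) := by
  have h : Tendsto (fun b : ℝ => (b⁻¹ + u⁻¹)⁻¹) atTop (𝓝 u) := by
    simpa using (tendsto_inv_atTop_zero.add_const u⁻¹).inv₀ (by simp [hu.ne'])
  refine ((continuous_sqrt.tendsto u).comp h).congr' ?_
  filter_upwards [eventually_gt_atTop 0] with b hb
  rw [Function.comp_apply, sqrt_mul_rpow_neg_half_one_add_div hb.le hu]
  congr 1
  field_simp

variable {k : ℝ → ℝ}

lemma integrableOn_rpow_neg_half_one_add_div_mul (hk : IntegrableOn k (Ioi 0)) {b : ℝ}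
    (hb : 0 ≤ b) : IntegrableOn (fun u => (1 + b / u) ^ (-(1 / 2 : ℝ)) * k u) (Ioi 0) := by
  refine hk.bdd_mul (c := 1) (Measurable.aestronglyMeasurable (by fun_prop)) ?_
  filter_upwards [self_mem_ae_restrict measurableSet_Ioi] with u (hu : 0 < u)
  rw [norm_of_nonneg (by positivity)]
  exact rpow_le_one_of_one_le_of_nonpos (one_le_one_add_div hb hu) (by norm_num)

lemma invSqrtTransform_pos (hk : IntegrableOn k (Ioi 0)) (hk_pos : ∀ u ∈ Ioi 0, 0 < k u)
    {b : ℝ} (hb : 0 ≤ b) : 0 < invSqrtTransform k b := by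
  have h_pos : ∀ u ∈ Ioi (0 : ℝ), 0 < (1 + b / u) ^ (-(1 / 2 : ℝ)) * k u :=
    fun u (hu : 0 < u) => mul_pos (by positivity) (hk_pos u hu)
  rw [invSqrtTransform, setIntegral_pos_iff_support_of_nonneg_ae
    ((ae_restrict_iff' measurableSet_Ioi).2 (ae_of_all _ fun u hu => (h_pos u hu).le))
    (integrableOn_rpow_neg_half_one_add_div_mul hk hb),
    inter_eq_right.2 fun u hu => Function.mem_support.2 (h_pos u hu).ne', volume_Ioi]
  exact ENNReal.zero_lt_top

lemma antitoneOn_invSqrtTransform (hk : IntegrableOn k (Ioi 0))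
    (hk_nonneg : ∀ u ∈ Ioi 0, 0 ≤ k u) : AntitoneOn (invSqrtTransform k) (Ici 0) := by
  intro b₁ (hb₁ : 0 ≤ b₁) b₂ (hb₂ : 0 ≤ b₂) hb
  refine setIntegral_mono_on (integrableOn_rpow_neg_half_one_add_div_mul hk hb₂)
    (integrableOn_rpow_neg_half_one_add_div_mul hk hb₁) measurableSet_Ioi
    (fun u (hu : 0 < u) => ?_)
  refine mul_le_mul_of_nonneg_right ?_ (hk_nonneg u hu)
  exact rpow_le_rpow_of_nonpos (by positivity) (by gcongr) (by norm_num)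

lemma tendsto_sqrt_mul_invSqrtTransform (hk : AEStronglyMeasurable k (volume.restrict (Ioi 0)))
    (hk_sqrt : IntegrableOn (fun u => √u * k u) (Ioi 0)) :
    Tendsto (fun b => √b * invSqrtTransform k b) atTop (𝓝 (∫ u in Ioi (0 : ℝ), √u * k u)) := by
  simp only [invSqrtTransform, ← integral_const_mul, ← mul_assoc]
  refine tendsto_integral_filter_of_dominated_convergence (fun u => ‖√u * k u‖)
    (Eventually.of_forall fun b => (Measurable.aestronglyMeasurable (by fun_prop)).mul hk) ?_
    hk_sqrt.norm ?_
  · filter_upwards [eventually_ge_atTop 0] with b hb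
    filter_upwards [self_mem_ae_restrict measurableSet_Ioi] with u (hu : 0 < u)
    simp only [norm_mul, norm_of_nonneg (sqrt_nonneg _)]
    rw [norm_of_nonneg (by positivity)]
    exact mul_le_mul_of_nonneg_right
      (sqrt_mul_rpow_neg_half_one_add_div_le hb hu) (norm_nonneg _)
  · filter_upwards [self_mem_ae_restrict measurableSet_Ioi] with u hu
    exact (tendsto_sqrt_mul_rpow_neg_half_one_add_div hu).mul_const _

end InvSqrtTransform

lemma tendsto_atTop_of_antitoneOn_of_tendsto_comp_zero {ι : Type*} {p : Filter ι}
    {f : ℝ → ℝ} {g : ι → ℝ} (hf : AntitoneOn f (Ici 0)) (hf_pos : ∀ b, 0 ≤ b → 0 < f b)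
    (hg : ∀ᶠ i in p, 0 ≤ g i) (h : Tendsto (f ∘ g) p (𝓝 0)) : Tendsto g p atTop := by
  refine tendsto_atTop.2 fun M => ?_
  have hM : (0 : ℝ) ≤ max M 0 := le_max_right _ _
  filter_upwards [h.eventually_lt_const (hf_pos _ hM), hg] with i hfi hgi
  by_contra! hlt
  exact hfi.not_ge (hf hgi hM (hlt.le.trans (le_max_left _ _)))

/-- If `β(α)` solves `(1+α)^{-1/2} = ∫₀^∞ (1+β/u)^{-1/2} k_λ(u) du` for each
`α > 0`, then `(β(α)/α)^{1/2} → E(√U) = (2/λ)^{1/2} Γ((λ+1)/2)/Γ(λ/2)` as `α → ∞`. -/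
theorem stmt13 (l : ℝ) (hl : 0 < l) (β : ℝ → ℝ)
    (hβ : ∀ α : ℝ, 0 < α → 0 < β α ∧
      (1 + α) ^ (-(1 / 2 : ℝ)) =
        ∫ u in Set.Ioi (0 : ℝ), (1 + β α / u) ^ (-(1 / 2 : ℝ)) * gammaPdf l u) :
    Tendsto (fun α : ℝ => Real.sqrt (β α / α)) atTop
      (nhds (Real.sqrt (2 / l) * Real.Gamma ((l + 1) / 2) / Real.Gamma (l / 2))) := by
  have hk_int := integrableOn_gammaPdf hl
  have hk_pos : ∀ u ∈ Ioi (0 : ℝ), 0 < gammaPdf l u := fun u hu => gammaPdf_pos hl hu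
  have h_eq : (fun α => invSqrtTransform (gammaPdf l) (β α)) =ᶠ[atTop]
      fun α => (1 + α) ^ (-(1 / 2 : ℝ)) :=
    (eventually_gt_atTop 0).mono fun α hα => (hβ α hα).2.symm
  have hβ_top : Tendsto β atTop atTop := by
    refine tendsto_atTop_of_antitoneOn_of_tendsto_comp_zero
      (antitoneOn_invSqrtTransform hk_int fun u hu => (hk_pos u hu).le)
      (fun b hb => invSqrtTransform_pos hk_int hk_pos hb)
      ((eventually_gt_atTop 0).mono fun α hα => (hβ α hα).1.le) (Tendsto.congr' h_eq.symm ?_)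
    exact (tendsto_rpow_neg_atTop (by norm_num)).comp (tendsto_atTop_add_const_left _ 1 tendsto_id)
  have h_num : Tendsto (fun α => √(β α) * invSqrtTransform (gammaPdf l) (β α)) atTop
      (𝓝 (√(2 / l) * Gamma ((l + 1) / 2) / Gamma (l / 2))) := by
    have hk_sqrt : IntegrableOn (fun u => √u * gammaPdf l u) (Ioi 0) := by
      simpa only [sqrt_eq_rpow] using integrableOn_rpow_mul_gammaPdf hl (by linarith)
    rw [← integral_sqrt_mul_gammaPdf hl]
    exact (tendsto_sqrt_mul_invSqrtTransform hk_int.aestronglyMeasurable hk_sqrt).comp hβ_top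
  have h_den : Tendsto (fun α : ℝ => √α * (1 + α) ^ (-(1 / 2 : ℝ))) atTop (𝓝 1) := by
    simpa using tendsto_sqrt_mul_rpow_neg_half_one_add_div one_pos
  have h_quot := h_num.div h_den one_ne_zero
  rw [div_one] at h_quot
  refine h_quot.congr' ?_
  filter_upwards [h_eq, eventually_gt_atTop 0] with α hα_eq hα
  have h_ne : (1 + α) ^ (-(1 / 2 : ℝ)) ≠ 0 := by positivity
  rw [Pi.div_apply, hα_eq, sqrt_div' _ hα.le]
  field_simp
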